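/- arXiv:1601.02123 — 2 statements merged into one kernel-verified Lean document; each statement's English description precedes it below -/
import Mathlib

section
/- Let r(k,k′) = 4·sin(πk)·sin(π(k−k′))·sin(π(2k−k′)), e₊(k) = (8/3)·sin⁴(πk) and e₋(k) = 2·sin²(2πk). Then for all k, k′ ∈ ℝ: (1/2)·(r(k, k−k′)² + r(k, k+k′)²) = (3/4)·(e₋(k)·e₊(k′) + e₊(k)·e₋(k′)), and both sides equal 8·sin²(πk)·sin²(πk′)·(1 − cos(2πk)·cos(2πk′)). -/
noncomputable section

open Real

/-- `r(k,k′) = 4·sin(πk)·sin(π(k−k′))·sin(π(2k−k′))`. -/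
def r (k k' : ℝ) : ℝ :=
  4 * Real.sin (π * k) * Real.sin (π * (k - k')) * Real.sin (π * (2 * k - k'))

/-- `e₊(k) = (8/3)·sin⁴(πk)`. -/
def ePlus (k : ℝ) : ℝ := (8 / 3) * Real.sin (π * k) ^ 4

/-- `e₋(k) = 2·sin²(2πk)`. -/
def eMinus (k : ℝ) : ℝ := 2 * Real.sin (2 * π * k) ^ 2

/-! With `a = πk`, `b = πk'`, the two kernel values are `±4 sin a sin b sin (a ± b)`, so the
left-hand side is `8 sin² a sin² b (sin² (a + b) + sin² (a - b))`. Expanding the last factor by the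
addition formulas gives `2 (sin² a cos² b + cos² a sin² b)`, which is the `e₋ e₊` form, and
`1 - cos 2a cos 2b`. -/

theorem Real.sin_sq_add_add_sin_sq_sub (a b : ℝ) :
    sin (a + b) ^ 2 + sin (a - b) ^ 2 = 2 * (sin a ^ 2 * cos b ^ 2 + cos a ^ 2 * sin b ^ 2) := by
  rw [sin_add, sin_sub]
  ring

theorem Real.sin_sq_add_add_sin_sq_sub_eq_one_sub (a b : ℝ) :
    sin (a + b) ^ 2 + sin (a - b) ^ 2 = 1 - cos (2 * a) * cos (2 * b) := by
  rw [sin_sq_add_add_sin_sq_sub, cos_two_mul, cos_two_mul, cos_sq', cos_sq']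
  ring

theorem r_sq_add_r_sq (k k' : ℝ) :
    r k (k - k') ^ 2 + r k (k + k') ^ 2 =
      16 * sin (π * k) ^ 2 * sin (π * k') ^ 2 *
        (sin (π * k + π * k') ^ 2 + sin (π * k - π * k') ^ 2) := by
  have h₁ : π * (k - (k - k')) = π * k' := by ring
  have h₂ : π * (2 * k - (k - k')) = π * k + π * k' := by ring
  have h₃ : π * (k - (k + k')) = -(π * k') := by ring
  have h₄ : π * (2 * k - (k + k')) = π * k - π * k' := by ring
  rw [r, r, h₁, h₂, h₃, h₄, sin_neg]
  ring

theorem eMinus_eq (k : ℝ) : eMinus k = 8 * sin (π * k) ^ 2 * cos (π * k) ^ 2 := by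
  rw [eMinus, mul_assoc, sin_two_mul]
  ring

theorem scattering_kernel_identity (k k' : ℝ) :
    (1 / 2) * (r k (k - k') ^ 2 + r k (k + k') ^ 2)
      = (3 / 4) * (eMinus k * ePlus k' + ePlus k * eMinus k') ∧
    (1 / 2) * (r k (k - k') ^ 2 + r k (k + k') ^ 2)
      = 8 * Real.sin (π * k) ^ 2 * Real.sin (π * k') ^ 2 *
          (1 - Real.cos (2 * π * k) * Real.cos (2 * π * k')) := by
  rw [r_sq_add_r_sq]
  constructor
  · rw [sin_sq_add_add_sin_sq_sub, eMinus_eq, eMinus_eq, ePlus, ePlus]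
    ring
  · rw [sin_sq_add_add_sin_sq_sub_eq_one_sub, mul_assoc 2 π, mul_assoc 2 π]
    ring
end
end

section
/- Let D₁, D₂ ∈ ℂ and D₊, b ∈ ℝ. Then the determinant of the 4×4 complex matrix with rows (D₁, D₊, b, 0), (D₊, D₂, 0, b), (b, 0, D₂*, D₊), (0, b, D₊, D₁*) equals |D₁·D₂* + D₊² − b²|² − 4·D₊²·(Re D₁)·(Re D₂). -/
/-! Write the matrix as the block matrix `[[A, b], [b, B]]` with
`A = [[D₁, D₊], [D₊, D₂]]` and `B = [[D₂*, D₊], [D₊, D₁*]]`. The scalar block `b` commutes with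
`B`, so by Silvester's formula the determinant is `det (A B - b²)`, and
`A B - b² = [[z, 2 D₊ Re D₁], [2 D₊ Re D₂, z*]]` with `z = D₁ D₂* + D₊² - b²`. -/

noncomputable section

open Matrix Complex
open scoped ComplexConjugate

namespace Matrix

variable {n R : Type*} [Fintype n] [DecidableEq n] [CommRing R]

theorem det_fromBlocks_mul_det_of_commute {A B C D : Matrix n n R} (hCD : Commute C D) :
    (fromBlocks A B C D).det * D.det = (A * D - B * C).det * D.det := by
  have hfactor : fromBlocks A B C D * fromBlocks D 0 (-C) 1 = fromBlocks (A * D - B * C) B 0 D := by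
    rw [fromBlocks_multiply]
    simp [hCD.eq, sub_eq_add_neg]
  simpa [det_fromBlocks_zero₂₁, det_fromBlocks_zero₁₂] using congrArg det hfactor

theorem map_charmatrix_eval_zero (M : Matrix n n R) :
    (charmatrix M).map (Polynomial.eval 0) = -M := by
  ext i j
  by_cases h : i = j
  · subst h; simp
  · simp [h]

theorem det_fromBlocks_of_commute {A B C D : Matrix n n R} (hCD : Commute C D) :
    (fromBlocks A B C D).det = (A * D - B * C).det := by
  -- Replace `D` by `X + D` over `R[X]`: its determinant is the monic `charpoly (-D)`, which can
  -- be cancelled; then specialise at `X = 0`.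
  have hCX : Commute (C.map Polynomial.C) (charmatrix (-D)) := by
    refine Commute.sub_right ?_ ?_
    · exact (scalar_commute _ (fun _ => Commute.all _ _) _).symm
    · exact hCD.neg_right.map (Polynomial.C : R →+* Polynomial R).mapMatrix
  have hdetX := (charpoly_monic (-D)).isRegular.right
    (det_fromBlocks_mul_det_of_commute (A := A.map Polynomial.C) (B := B.map Polynomial.C) hCX)
  have hdet0 := congrArg (Polynomial.evalRingHom 0) hdetX
  simp only [RingHom.map_det, RingHom.mapMatrix_apply, fromBlocks_map, map_mul, map_sub] at hdet0
  simpa [Matrix.map_map, Function.comp_def, map_charmatrix_eval_zero] using hdet0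

end Matrix

theorem Complex.det_fin_two_of_conj (z : ℂ) (r s : ℝ) :
    !![z, (r : ℂ); (s : ℂ), conj z].det = ((‖z‖ ^ 2 - r * s : ℝ) : ℂ) := by
  rw [det_fin_two_of, mul_conj, normSq_eq_norm_sq]
  push_cast
  ring

theorem det_block_four_by_four (D₁ D₂ : ℂ) (Dp b : ℝ) :
    (!![D₁, (Dp : ℂ), (b : ℂ), 0;
        (Dp : ℂ), D₂, 0, (b : ℂ);
        (b : ℂ), 0, (starRingEnd ℂ) D₂, (Dp : ℂ);
        0, (b : ℂ), (Dp : ℂ), (starRingEnd ℂ) D₁] : Matrix (Fin 4) (Fin 4) ℂ).det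
      = ((‖D₁ * (starRingEnd ℂ) D₂ + (Dp : ℂ) ^ 2 - (b : ℂ) ^ 2‖) ^ 2
          - 4 * Dp ^ 2 * D₁.re * D₂.re : ℝ) := by
  set A : Matrix (Fin 2) (Fin 2) ℂ := !![D₁, (Dp : ℂ); (Dp : ℂ), D₂]
  set B : Matrix (Fin 2) (Fin 2) ℂ := !![conj D₂, (Dp : ℂ); (Dp : ℂ), conj D₁]
  have hblocks : (!![D₁, (Dp : ℂ), (b : ℂ), 0;
        (Dp : ℂ), D₂, 0, (b : ℂ);
        (b : ℂ), 0, conj D₂, (Dp : ℂ);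
        0, (b : ℂ), (Dp : ℂ), conj D₁] : Matrix (Fin 4) (Fin 4) ℂ) =
      reindex finSumFinEquiv finSumFinEquiv
        (fromBlocks A !![(b : ℂ), 0; 0, (b : ℂ)] !![(b : ℂ), 0; 0, (b : ℂ)] B) := by
    ext i j
    fin_cases i <;> fin_cases j <;> rfl
  have hscalar : !![(b : ℂ), 0; 0, (b : ℂ)] = (b : ℂ) • 1 := by simp [one_fin_two]
  have hschur : A * B - (b : ℂ) • 1 * (b : ℂ) • 1 =
      !![D₁ * conj D₂ + Dp ^ 2 - b ^ 2, ((2 * Dp * D₁.re : ℝ) : ℂ);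
        ((2 * Dp * D₂.re : ℝ) : ℂ), conj (D₁ * conj D₂ + Dp ^ 2 - b ^ 2)] := by
    rw [smul_mul_smul_comm, one_mul, mul_fin_two, one_fin_two, smul_of]
    ext i j
    fin_cases i <;> fin_cases j <;> simp [Complex.ext_iff, sq] <;> constructor <;> ring
  rw [hblocks, det_reindex_self, hscalar,
    det_fromBlocks_of_commute ((Commute.one_left B).smul_left _), hschur, det_fin_two_of_conj]
  push_cast
  ring
end
end
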